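/- arXiv:1909.01751 — 8 statements merged into one kernel-verified Lean document; each statement's English description precedes it below -/
import Mathlib

section
/- Let A be a fixed infinite set of atoms and let S_A denote the group of finitary permutations of A (bijections generated by finitely many transpositions), acting on A naturally. A bijection f : A → A is finitely supported (with respect to the conjugation action π·f = π∘f∘π⁻¹) if and only if f is a finitary permutation of A. -/
open Pointwise

/-- The group of finitary permutations of the set `A` of atoms:
bijections of `A` that move only finitely many atoms. -/
def finPerm (A : Type*) : Subgroup (Equiv.Perm A) where
  carrier := {π | {a | π a ≠ a}.Finite}
  one_mem' := by simp
  mul_mem' := by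
    intro π σ hπ hσ
    apply Set.Finite.subset (hπ.union hσ)
    intro a ha
    by_contra hc
    simp only [Set.mem_union, Set.mem_setOf_eq, not_or, not_not] at hc
    exact ha (by simp [Equiv.Perm.mul_apply, hc.1, hc.2])
  inv_mem' := by
    intro π hπ
    apply Set.Finite.subset hπ
    intro a ha
    simp only [Set.mem_setOf_eq] at ha ⊢
    intro h
    exact ha (Equiv.Perm.inv_eq_iff_eq.mpr h.symm)

/-- `x` is finitely supported: some finite set of atoms supports it. -/
def FinitelySupported (A : Type*) {X : Type*} [MulAction (finPerm A) X] (x : X) : Prop :=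
  ∃ S : Set A, S.Finite ∧ MulAction.Supports (finPerm A) S x

/-- A subset `Z` of an `S_A`-set is uniformly supported if a single finite set
of atoms supports every element of `Z`. -/
def UniformlySupported (A : Type*) {X : Type*} [MulAction (finPerm A) X] (Z : Set X) : Prop :=
  ∃ S : Set A, S.Finite ∧ ∀ x ∈ Z, MulAction.Supports (finPerm A) S x

/-- The least support of `x`: the intersection of all finite sets of atoms supporting `x`. -/
noncomputable def supp (A : Type*) {X : Type*} [MulAction (finPerm A) X] (x : X) : Set A :=
  ⋂₀ {S : Set A | S.Finite ∧ MulAction.Supports (finPerm A) S x}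

/-- `Z` contains no infinite uniformly supported subset
(`Z` is "FSM non-uniformly infinite"). -/
def NoInfUS (A : Type*) {X : Type*} [MulAction (finPerm A) X] (Z : Set X) : Prop :=
  ∀ W ⊆ Z, UniformlySupported A W → W.Finite

/-- The uniform powerset `℘_us(X)`: all uniformly supported subsets of `X`. -/
def usPowerset (A : Type*) {X : Type*} [MulAction (finPerm A) X] (Z : Set X) : Set (Set X) :=
  {W | W ⊆ Z ∧ UniformlySupported A W}

/-- The finite powerset `℘_fin(X)`: all finite subsets of `X`. -/
def finPowerset {X : Type*} (Z : Set X) : Set (Set X) :=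
  {W | W ⊆ Z ∧ W.Finite}

/-- `S` supports the function `f` on the domain `X` (Proposition 2.18'(2)):
for every `π` fixing `S` pointwise and every `x ∈ X`, `π • x ∈ X` and
`f (π • x) = π • f x`. -/
def FnSupportsOn (A : Type*) {Y : Type*} [MulAction (finPerm A) Y]
    (X : Set Y) (S : Set A) (f : Y → Y) : Prop :=
  ∀ π : finPerm A, (∀ a ∈ S, π • a = a) → ∀ x ∈ X, π • x ∈ X ∧ f (π • x) = π • f x

/-- The least support of a function `f` with domain `X`. -/
noncomputable def fnSupp (A : Type*) {Y : Type*} [MulAction (finPerm A) Y]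
    (X : Set Y) (f : Y → Y) : Set A :=
  ⋂₀ {S : Set A | S.Finite ∧ FnSupportsOn A X S f}

/-!
The set of atoms moved by `f` supports `f` under conjugation, since a finitary permutation fixing
it pointwise is disjoint from, hence commutes with, `f`. Conversely, let `S` be a finite support
and `f a ≠ a` with `a ∉ S`. Choose a fresh atom `b ∉ S ∪ {a, f a}` (possible because `A` is
infinite): the transposition `(a b)` fixes `S`, and commuting with it forces `f b = f a`,
contradicting injectivity. So every finite support contains the moved atoms.
-/

section

open Equiv

variable {A : Type*}

def ConjSupports (S : Set A) (f : Perm A) : Prop :=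
  ∀ π : finPerm A, (∀ a ∈ S, π • a = a) → (π : Perm A) * f * (π : Perm A)⁻¹ = f

theorem swap_mem_finPerm [DecidableEq A] (a b : A) : swap a b ∈ finPerm A :=
  ((Set.finite_singleton b).insert a).subset fun x hx => by
    by_contra hxab
    simp only [Set.mem_insert_iff, Set.mem_singleton_iff, not_or] at hxab
    exact hx (swap_apply_of_ne_of_ne hxab.1 hxab.2)

theorem conjSupports_moved (f : Perm A) : ConjSupports {a | f a ≠ a} f := by
  intro π hπ
  have hdisj : Perm.Disjoint π f := fun a => (em (f a = a)).elim Or.inr fun ha => Or.inl (hπ a ha)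
  rw [hdisj.commute.eq, mul_inv_cancel_right]

theorem moved_subset_of_conjSupports [Infinite A] {S : Set A} {f : Perm A} (hS : S.Finite)
    (hf : ConjSupports S f) : {a | f a ≠ a} ⊆ S := by
  classical
  intro a (ha : f a ≠ a)
  by_contra haS
  obtain ⟨b, hb⟩ := (hS.union ((Set.finite_singleton a).insert (f a))).infinite_compl.nonempty
  simp only [Set.mem_compl_iff, Set.mem_union, Set.mem_insert_iff, Set.mem_singleton_iff,
    not_or] at hb
  obtain ⟨hbS, hbfa, hba⟩ := hb
  have hfix : ∀ c ∈ S, (⟨swap a b, swap_mem_finPerm a b⟩ : finPerm A) • c = c := fun c hc =>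
    swap_apply_of_ne_of_ne (ne_of_mem_of_not_mem hc haS) (ne_of_mem_of_not_mem hc hbS)
  have hcomm : swap a b * f = f * swap a b := by
    simpa using congrArg (· * swap a b) (hf _ hfix)
  have hfb : f b = f a := by
    simpa [swap_apply_of_ne_of_ne ha (Ne.symm hbfa)] using (congrArg (· a) hcomm).symm
  exact hba (f.injective hfb)

end

/-- A bijection `f : A → A` is finitely supported with respect to the
conjugation action `π • f = π ∘ f ∘ π⁻¹` if and only if `f` is a finitary permutation. -/
theorem stmt0 {A : Type*} [Infinite A] (f : Equiv.Perm A) :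
    (∃ S : Set A, S.Finite ∧ ∀ π : finPerm A, (∀ a ∈ S, π • a = a) →
        (π : Equiv.Perm A) * f * (π : Equiv.Perm A)⁻¹ = f) ↔ f ∈ finPerm A := by
  constructor
  · rintro ⟨S, hS, hf⟩
    exact hS.subset (moved_subset_of_conjSupports hS hf)
  · exact fun hf => ⟨_, hf, conjSupports_moved f⟩
end

section
/- Let X be an S_A-set and let Z ⊆ X be a uniformly supported subset, i.e. there exists a finite set T ⊆ A supporting every element of Z. Then supp(Z) (the support of Z as an element of the powerset with the induced action) equals the union ⋃_{x ∈ Z} supp(x). -/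
open Pointwise

/-! A finitary permutation fixing `S ∩ T` is a product of transpositions of atoms outside
`S ∩ T`, and each of these factors, through a fresh atom, into permutations fixing `S` or `T`;
so two finite supports of an element meet in a support, and the least support of a finitely
supported element is itself a support. Hence `⋃ x ∈ Z, supp x` supports `Z`. Conversely, if a
finite support `S` of `Z` missed some `a ∈ supp x` with `x ∈ Z`, swapping `a` with a fresh atom
would fix `Z`, hence map `x` to an element supported by the uniform support `T`, forcing the
fresh atom into `T`. -/

open MulAction

namespace finPerm

variable {A : Type*} [DecidableEq A]

def swap (a b : A) : finPerm A :=
  ⟨Equiv.swap a b, (Set.toFinite {a, b}).subset fun _ hc =>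
    (Equiv.swap_apply_ne_self_iff.1 hc).2⟩

lemma swap_smul (a b c : A) : swap a b • c = Equiv.swap a b c := rfl

lemma swap_mem_fixingSubgroup {S : Set A} {a b : A} (ha : a ∉ S) (hb : b ∉ S) :
    swap a b ∈ fixingSubgroup (finPerm A) S :=
  (mem_fixingSubgroup_iff _).2 fun _ hc =>
    Equiv.swap_apply_of_ne_of_ne (ne_of_mem_of_not_mem hc ha) (ne_of_mem_of_not_mem hc hb)

-- `(a b) = (c a) (b c) (c a)` for a fresh atom `c`, with `(c a)` fixing `S` and `(b c)` fixing `T`.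
lemma swap_mem_fixingSubgroup_sup [Infinite A] {S T : Set A} (hS : S.Finite) (hT : T.Finite)
    {a b : A} (ha : a ∉ S ∩ T) (hb : b ∉ S ∩ T) :
    swap a b ∈ fixingSubgroup (finPerm A) S ⊔ fixingSubgroup (finPerm A) T := by
  have key : ∀ a b, a ∉ S → b ∉ T →
      swap a b ∈ fixingSubgroup (finPerm A) S ⊔ fixingSubgroup (finPerm A) T := by
    intro a b haS hbT
    rcases eq_or_ne b a with rfl | hba
    · exact Subgroup.mem_sup_left (swap_mem_fixingSubgroup haS haS)
    obtain ⟨c, -, hc⟩ :=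
      Set.infinite_univ.exists_notMem_finite (((hS.union hT).insert a).insert b)
    simp only [Set.mem_insert_iff, Set.mem_union, not_or] at hc
    obtain ⟨hcb, hca, hcS, hcT⟩ := hc
    have hsplit : swap a b = swap c a * swap b c * swap c a :=
      Subtype.ext (Equiv.swap_mul_swap_mul_swap (Ne.symm hcb) hba).symm
    rw [hsplit]
    have hca_mem := Subgroup.mem_sup_left (T := fixingSubgroup (finPerm A) T)
      (swap_mem_fixingSubgroup hcS haS)
    exact mul_mem (mul_mem hca_mem
      (Subgroup.mem_sup_right (swap_mem_fixingSubgroup hbT hcT))) hca_mem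
  rw [Set.mem_inter_iff, not_and_or] at ha hb
  rcases ha with haS | haT <;> rcases hb with hbS | hbT
  · exact Subgroup.mem_sup_left (swap_mem_fixingSubgroup haS hbS)
  · exact key a b haS hbT
  · rw [show swap a b = swap b a from Subtype.ext (Equiv.swap_comm a b)]
    exact key b a hbS haT
  · exact Subgroup.mem_sup_right (swap_mem_fixingSubgroup haT hbT)

lemma fixingSubgroup_le_closure_swap (S : Set A) :
    fixingSubgroup (finPerm A) S ≤ Subgroup.closure (Set.image2 swap Sᶜ Sᶜ) := by
  classical
  intro π hπ
  set M : Set A := {a | (π : Equiv.Perm A) a ≠ a}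
  have : Finite M := π.2.to_subtype
  have hMS : ∀ a ∈ M, a ∉ S := fun a ha haS => ha ((mem_fixingSubgroup_iff _).1 hπ a haS)
  have hπM : ∀ a, (π : Equiv.Perm A) a ∈ M ↔ a ∈ M := fun _ =>
    (π : Equiv.Perm A).injective.ne_iff
  have hπ_eq : Equiv.Perm.ofSubtype ((π : Equiv.Perm A).subtypePerm hπM) = π :=
    Equiv.Perm.ofSubtype_subtypePerm hπM fun _ ha => ha
  rw [← Subgroup.mem_map_iff_mem (finPerm A).subtype_injective, MonoidHom.map_closure]
  change (π : Equiv.Perm A) ∈ _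
  rw [← hπ_eq]
  have hswaps : Subgroup.map Equiv.Perm.ofSubtype (⊤ : Subgroup (Equiv.Perm M)) ≤
      Subgroup.closure ((finPerm A).subtype '' Set.image2 swap Sᶜ Sᶜ) := by
    rw [← Equiv.Perm.closure_isSwap, MonoidHom.map_closure]
    refine Subgroup.closure_mono ?_
    rintro _ ⟨σ, ⟨x, y, -, rfl⟩, rfl⟩
    exact ⟨swap x y, ⟨x, hMS x x.2, y, hMS y y.2, rfl⟩,
      (Equiv.Perm.ofSubtype_swap_eq x y).symm⟩
  exact hswaps ⟨_, Subgroup.mem_top _, rfl⟩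

end finPerm

lemma finPerm.fixingSubgroup_inter_le_sup {A : Type*} [Infinite A] {S T : Set A}
    (hS : S.Finite) (hT : T.Finite) :
    fixingSubgroup (finPerm A) (S ∩ T) ≤
      fixingSubgroup (finPerm A) S ⊔ fixingSubgroup (finPerm A) T := by
  classical
  refine (finPerm.fixingSubgroup_le_closure_swap _).trans (Subgroup.closure_le _ |>.2 ?_)
  rintro _ ⟨a, ha, b, hb, rfl⟩
  exact finPerm.swap_mem_fixingSubgroup_sup hS hT ha hb

theorem MulAction.Supports.of_smul {G α β : Type*} [Group G] [MulAction G α] [MulAction G β]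
    {s : Set α} {b : β} (g : G) (h : Supports G s (g • b)) : Supports G (g⁻¹ • s) b := by
  intro k hk
  have hconj : (g * k * g⁻¹) • g • b = g • b := h _ fun a ha => by
    rw [mul_smul, mul_smul, hk (Set.smul_mem_smul_set ha), smul_inv_smul]
  rwa [mul_smul, mul_smul, inv_smul_smul, smul_left_cancel_iff] at hconj

section Support

variable {A X : Type*} [MulAction (finPerm A) X]

theorem MulAction.Supports.inter [Infinite A] {x : X} {S T : Set A} (hS : S.Finite)
    (hT : T.Finite) (hSx : Supports (finPerm A) S x) (hTx : Supports (finPerm A) T x) :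
    Supports (finPerm A) (S ∩ T) x := by
  have hle : fixingSubgroup (finPerm A) S ⊔ fixingSubgroup (finPerm A) T ≤
      stabilizer (finPerm A) x :=
    sup_le (fun π hπ => hSx π ((mem_fixingSubgroup_iff _).1 hπ))
      (fun π hπ => hTx π ((mem_fixingSubgroup_iff _).1 hπ))
  exact fun π hπ =>
    hle (finPerm.fixingSubgroup_inter_le_sup hS hT ((mem_fixingSubgroup_iff _).2 hπ))

theorem supp_subset {x : X} {S : Set A} (hS : S.Finite) (hSx : Supports (finPerm A) S x) :
    supp A x ⊆ S :=
  Set.sInter_subset_of_mem ⟨hS, hSx⟩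

-- A minimal support inside `T` lies in every finite support, by `Supports.inter`.
theorem supports_supp [Infinite A] {x : X} (hx : FinitelySupported A x) :
    Supports (finPerm A) (supp A x) x := by
  obtain ⟨T, hT, hTx⟩ := hx
  obtain ⟨S₀, -, hS₀⟩ := (hT.finite_subsets.subset fun S hS => hS.1 :
    {S | S ⊆ T ∧ Supports (finPerm A) S x}.Finite).exists_le_minimal ⟨subset_rfl, hTx⟩
  refine hS₀.prop.2.mono (Set.subset_sInter fun S ⟨hS, hSx⟩ => ?_)
  obtain ⟨hS₀T, hS₀x⟩ := hS₀.prop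
  have hinter : S₀ ∩ S ⊆ T ∧ Supports (finPerm A) (S₀ ∩ S) x :=
    ⟨Set.inter_subset_left.trans hS₀T, hS₀x.inter (hT.subset hS₀T) hS hSx⟩
  exact (hS₀.le_of_le hinter Set.inter_subset_left).trans Set.inter_subset_right

theorem supports_biUnion_supp [Infinite A] {Z : Set X} (hZ : ∀ x ∈ Z, FinitelySupported A x) :
    Supports (finPerm A) (⋃ x ∈ Z, supp A x) Z := by
  intro π hπ
  have hfix : ∀ x ∈ Z, π • x = x := fun x hx =>
    supports_supp (hZ x hx) π fun a ha => hπ (Set.mem_biUnion hx ha)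
  exact (Set.image_congr hfix).trans (Set.image_id Z)

theorem supp_subset_supp_of_mem [Infinite A] {Z : Set X}
    (hZ : UniformlySupported A Z) {x : X} (hx : x ∈ Z) : supp A x ⊆ supp A Z := by
  classical
  obtain ⟨T, hT, hTZ⟩ := hZ
  refine Set.subset_sInter fun S ⟨hS, hSZ⟩ a ha => ?_
  by_contra haS
  obtain ⟨b, -, hb⟩ := Set.infinite_univ.exists_notMem_finite (hS.union hT)
  obtain ⟨hbS, hbT⟩ := not_or.1 hb
  set π := finPerm.swap a b
  have hπZ : π • Z = Z :=
    hSZ π ((mem_fixingSubgroup_iff _).1 (finPerm.swap_mem_fixingSubgroup haS hbS))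
  have hπx : π • x ∈ Z := hπZ ▸ Set.smul_mem_smul_set hx
  have haT : a ∈ π⁻¹ • T := supp_subset hT.smul_set ((hTZ _ hπx).of_smul π) ha
  rw [Set.mem_inv_smul_set_iff, finPerm.swap_smul, Equiv.swap_apply_left] at haT
  exact hbT haT

end Support

/-- for a uniformly supported subset `Z` of an `S_A`-set `X`,
`supp Z = ⋃_{x ∈ Z} supp x`. -/
theorem stmt2 {A X : Type*} [Infinite A] [MulAction (finPerm A) X]
    (Z : Set X) (hZ : UniformlySupported A Z) :
    supp A Z = ⋃ x ∈ Z, supp A x := by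
  have ⟨T, hT, hTZ⟩ := hZ
  have hunion : ⋃ x ∈ Z, supp A x ⊆ T :=
    Set.iUnion₂_subset fun x hx => supp_subset hT (hTZ x hx)
  have hsupports : Supports (finPerm A) (⋃ x ∈ Z, supp A x) Z :=
    supports_biUnion_supp fun x hx => ⟨T, hT, hTZ x hx⟩
  exact (supp_subset (hT.subset hunion) hsupports).antisymm
    (Set.iUnion₂_subset fun x hx => supp_subset_supp_of_mem hZ hx)
end

section
/- Let X be a finitely supported subset of an invariant set with no infinite uniformly supported subset, and let f : ℘_us(X) → ℘_us(X) be a finitely supported function satisfying Z ⊆ f(Z) for all Z ∈ ℘_us(X). Then for every Z ∈ ℘_us(X) there exists m ∈ ℕ such that f^m(Z) is a fixed point of f. -/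
open Pointwise

/-!
Let `S` support `f` and `T` support `Z`. Every iterate `f^[m] Z` is then a uniformly supported
set which, as a set, is supported by `V = S ∪ T`. Since there are infinitely many atoms, the
elements of such a set are themselves supported by `V`, so all iterates lie in
`{x ∈ X | V supports x}`: a uniformly supported, hence finite, subset of `X`. An increasing chain
of subsets of a finite set is eventually stationary.
-/

open MulAction Function Set

theorem exists_isFixedPt_iterate_of_le_of_finite_range {α : Type*} [PartialOrder α]
    {f : α → α} {x : α} (hle : ∀ m, f^[m] x ≤ f (f^[m] x))
    (hfin : (range fun m => f^[m] x).Finite) : ∃ m, IsFixedPt f (f^[m] x) := by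
  obtain ⟨m, n, hmn, heq⟩ := hfin.exists_lt_map_eq_of_forall_mem (fun m => mem_range_self m)
  have hmono : Monotone fun m => f^[m] x :=
    monotone_nat_of_le_succ fun m => by rw [iterate_succ_apply']; exact hle m
  refine ⟨m, le_antisymm ?_ (hle m)⟩
  calc f (f^[m] x) = f^[m + 1] x := (iterate_succ_apply' f m x).symm
    _ ≤ f^[n] x := hmono hmn
    _ = f^[m] x := heq.symm

theorem MulAction.supports_set_of_forall_mem {G α β : Type*} [SMul G α] [SMul G β]
    {s : Set α} {Z : Set β} (h : ∀ y ∈ Z, Supports G s y) : Supports G s Z := by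
  intro g hg
  ext y
  constructor
  · rintro ⟨z, hz, rfl⟩
    change g • z ∈ Z
    rwa [h z hz g hg]
  · intro hy
    exact ⟨y, hy, h y hy g hg⟩

namespace finPerm

variable {A : Type*}

theorem swap_mem [DecidableEq A] (a b : A) : Equiv.swap a b ∈ finPerm A :=
  (Set.toFinite {a, b}).subset fun x hx => by
    by_contra hab
    simp only [mem_insert_iff, mem_singleton_iff, not_or] at hab
    exact hx (Equiv.swap_apply_of_ne_of_ne hab.1 hab.2)

theorem exists_fixed_notMem [Infinite A] (π : finPerm A) {s : Set A} (hs : s.Finite) :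
    ∃ c ∉ s, π • c = c := by
  obtain ⟨c, hc⟩ := (hs.union π.2).infinite_compl.nonempty
  simp only [mem_compl_iff, mem_union, mem_ofPred_eq, not_or, not_not] at hc
  exact ⟨c, hc.1, hc.2⟩

variable {Y : Type*} [MulAction (finPerm A) Y]

/-- If `π` fixes `s`, conjugating it by the swap of `d` with an atom `c` fixed by `π` gives a
permutation fixing `insert d s`, which therefore fixes the swapped element. -/
theorem forall_supports_of_insert [Infinite A] {W : Set Y} {V s : Set A} {d : A}
    (hs : s.Finite) (hVs : V ⊆ s) (hd : d ∉ s) (hW : Supports (finPerm A) V W)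
    (h : ∀ y ∈ W, Supports (finPerm A) (insert d s) y) :
    ∀ y ∈ W, Supports (finPerm A) s y := by
  classical
  intro x hx π hπ
  obtain ⟨c, hc, hπc⟩ := exists_fixed_notMem π (hs.insert d)
  rw [mem_insert_iff, not_or] at hc
  let τ : finPerm A := ⟨Equiv.swap d c, swap_mem d c⟩
  have hτs : ∀ ⦃a⦄, a ∈ s → τ • a = a := fun a ha =>
    Equiv.swap_apply_of_ne_of_ne (ne_of_mem_of_not_mem ha hd) (ne_of_mem_of_not_mem ha hc.2)
  have hττ : τ * τ = 1 := Subtype.ext (Equiv.swap_mul_self d c)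
  have hτx : τ • x ∈ W := hW τ (fun a ha => hτs (hVs ha)) ▸ smul_mem_smul_set hx
  have hconj : (τ * π * τ) • τ • x = τ • x := by
    refine h _ hτx _ fun a ha => ?_
    rcases mem_insert_iff.1 ha with rfl | ha
    · change Equiv.swap a c (π • Equiv.swap a c a) = a
      rw [Equiv.swap_apply_left, hπc, Equiv.swap_apply_right]
    · rw [mul_smul, mul_smul, hτs ha, hπ ha, hτs ha]
  rw [mul_smul, mul_smul, ← mul_smul τ τ, hττ, one_smul] at hconj
  exact smul_left_cancel τ hconj

theorem forall_supports_of_uniformlySupported [Infinite A] {W : Set Y} {V : Set A}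
    (hV : V.Finite) (hunif : UniformlySupported A W) (hW : Supports (finPerm A) V W) :
    ∀ y ∈ W, Supports (finPerm A) V y := by
  obtain ⟨U, hU, hUW⟩ := hunif
  suffices H : ∀ D : Set A, D.Finite →
      (∀ y ∈ W, Supports (finPerm A) (D ∪ V) y) → ∀ y ∈ W, Supports (finPerm A) V y from
    H U hU fun y hy => (hUW y hy).mono subset_union_left
  intro D hD
  induction D, hD using Set.Finite.induction_on with
  | empty => simp
  | @insert d D _ hD ih =>
    intro h
    rw [insert_union] at h
    apply ih
    by_cases hd : d ∈ D ∪ V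
    · rwa [insert_eq_of_mem hd] at h
    · exact forall_supports_of_insert (hD.union hV) subset_union_right hd hW h

theorem _root_.FnSupportsOn.supports_iterate {D : Set Y} {S T : Set A} {f : Y → Y}
    (hf : FnSupportsOn A D S f) (hmap : MapsTo f D D) {x : Y} (hx : x ∈ D)
    (hxT : Supports (finPerm A) T x) (m : ℕ) : Supports (finPerm A) (S ∪ T) (f^[m] x) := by
  intro π hπ
  induction m with
  | zero => exact hxT π fun a ha => hπ (Or.inr ha)
  | succ m ih =>
    rw [iterate_succ_apply', ← (hf π (fun a ha => hπ (Or.inl ha)) _ (hmap.iterate m hx)).2, ih]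

end finPerm

theorem stmt7_general {A Y : Type*} [Infinite A] [MulAction (finPerm A) Y]
    (X : Set Y)
    (h : NoInfUS A X)
    (f : Set Y → Set Y)
    (hmap : ∀ Z ∈ usPowerset A X, f Z ∈ usPowerset A X)
    (hfs : ∃ S : Set A, S.Finite ∧ FnSupportsOn A (usPowerset A X) S f)
    (hprog : ∀ Z ∈ usPowerset A X, Z ⊆ f Z) :
    ∀ Z ∈ usPowerset A X, ∃ m : ℕ, f (f^[m] Z) = f^[m] Z := by
  intro Z hZ
  obtain ⟨S, hS, hfS⟩ := hfs
  obtain ⟨T, hT, hZT⟩ := hZ.2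
  have hV : (S ∪ T).Finite := hS.union hT
  have hiter : ∀ m, f^[m] Z ∈ usPowerset A X := fun m => MapsTo.iterate hmap m hZ
  have hsupp : ∀ m, Supports (finPerm A) (S ∪ T) (f^[m] Z) :=
    hfS.supports_iterate hmap hZ (supports_set_of_forall_mem hZT)
  let B : Set Y := {x ∈ X | Supports (finPerm A) (S ∪ T) x}
  have hB : B.Finite := h B (fun x hx => hx.1) ⟨S ∪ T, hV, fun x hx => hx.2⟩
  have hiterB : ∀ m, f^[m] Z ⊆ B := fun m x hx =>
    ⟨(hiter m).1 hx, finPerm.forall_supports_of_uniformlySupported hV (hiter m).2 (hsupp m) x hx⟩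
  exact exists_isFixedPt_iterate_of_le_of_finite_range (fun m => hprog _ (hiter m))
    (hB.finite_subsets.subset (range_subset_iff.2 hiterB))

/-- if `X` is not FSM uniformly infinite and `f : ℘_us(X) → ℘_us(X)` is
finitely supported with `Z ⊆ f Z` for all `Z`, then every `Z ∈ ℘_us(X)` reaches a
fixed point of `f` after finitely many iterations. -/
theorem stmt7 {A Y : Type*} [Infinite A] [MulAction (finPerm A) Y]
    (hinv : ∀ y : Y, FinitelySupported A y) (X : Set Y)
    (hX : FinitelySupported A X) (h : NoInfUS A X)
    (f : Set Y → Set Y)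
    (hmap : ∀ Z ∈ usPowerset A X, f Z ∈ usPowerset A X)
    (hfs : ∃ S : Set A, S.Finite ∧ FnSupportsOn A (usPowerset A X) S f)
    (hprog : ∀ Z ∈ usPowerset A X, Z ⊆ f Z) :
    ∀ Z ∈ usPowerset A X, ∃ m : ℕ, f (f^[m] Z) = f^[m] Z :=
  stmt7_general X h f hmap hfs hprog
end

section
/- Let f : ℘_fin(A) → ℘_fin(A) be a finitely supported function with Z ⊆ f(Z) for every finite subset Z of atoms. Then every finite subset of A containing supp(f) is a fixed point of f; in particular f has infinitely many fixed points. -/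
open Pointwise

/-- a finitely supported progressive self-map `f` of `℘_fin(A)` fixes every
finite set of atoms containing `supp(f)`; in particular it has infinitely many
fixed points. -/
theorem stmt8 {A : Type*} [Infinite A] (f : Set A → Set A)
    (hmap : ∀ Z : Set A, Z.Finite → (f Z).Finite)
    (hfs : ∃ S : Set A, S.Finite ∧ FnSupportsOn A {Z : Set A | Z.Finite} S f)
    (hprog : ∀ Z : Set A, Z.Finite → Z ⊆ f Z) :
    (∀ Z : Set A, Z.Finite → fnSupp A {Z : Set A | Z.Finite} f ⊆ Z → f Z = Z) ∧
      {Z : Set A | Z.Finite ∧ f Z = Z}.Infinite := by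
  classical
  obtain ⟨S₀, hS₀fin, hS₀⟩ := hfs
  have key : ∀ Z : Set A, Z.Finite → fnSupp A {Z : Set A | Z.Finite} f ⊆ Z → f Z = Z := by
    intro Z hZ hsub
    refine Set.Subset.antisymm ?_ (hprog Z hZ)
    intro a ha
    by_contra haZ
    have hanotsupp : a ∉ fnSupp A {Z : Set A | Z.Finite} f := fun h => haZ (hsub h)
    rw [fnSupp, Set.mem_sInter] at hanotsupp
    push_neg at hanotsupp
    obtain ⟨S, ⟨hSfin, hSsupp⟩, haS⟩ := hanotsupp
    obtain ⟨b, hb⟩ :=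
      ((hZ.union ((hmap Z hZ).union (hSfin.union (Set.finite_singleton a)))).infinite_compl).nonempty
    simp only [Set.mem_compl_iff, Set.mem_union, Set.mem_singleton_iff, not_or] at hb
    obtain ⟨hbZ, hbfZ, hbS, hba⟩ := hb
    have hmem : Equiv.swap a b ∈ finPerm A := by
      apply Set.Finite.subset ((Set.finite_singleton b).insert a)
      intro x hx
      simp only [Set.mem_setOf_eq] at hx
      by_contra hc
      simp only [Set.mem_insert_iff, Set.mem_singleton_iff, not_or] at hc
      exact hx (Equiv.swap_apply_of_ne_of_ne hc.1 hc.2)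
    set π : finPerm A := ⟨Equiv.swap a b, hmem⟩ with hπ
    have hsmul : ∀ x : A, π • x = Equiv.swap a b x := fun x => rfl
    have hfix : ∀ c ∈ S, π • c = c := by
      intro c hcS
      rw [hsmul]
      exact Equiv.swap_apply_of_ne_of_ne (fun h => haS (by rwa [h] at hcS))
        (fun h => hbS (by rwa [h] at hcS))
    obtain ⟨-, heq⟩ := hSsupp π hfix Z hZ
    have hZfix : π • Z = Z := by
      rw [← Set.image_smul]
      rw [show (fun x => π • x) '' Z = id '' Z from Set.image_congr fun x hx => by
        rw [hsmul]
        exact Equiv.swap_apply_of_ne_of_ne (fun h => haZ (by rwa [h] at hx))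
          (fun h => hbZ (by rwa [h] at hx))]
      exact Set.image_id Z
    have hbin : b ∈ f Z := by
      have : π • a ∈ π • f Z := Set.smul_mem_smul_set ha
      rw [← heq, hZfix, hsmul, Equiv.swap_apply_left] at this
      exact this
    exact hbfZ hbin
  refine ⟨key, ?_⟩
  have hsub₀ : fnSupp A {Z : Set A | Z.Finite} f ⊆ S₀ :=
    Set.sInter_subset_of_mem ⟨hS₀fin, hS₀⟩
  have himg : ((fun a => S₀ ∪ {a}) '' S₀ᶜ) ⊆ {Z : Set A | Z.Finite ∧ f Z = Z} := by
    rintro - ⟨a, -, rfl⟩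
    have hfin : (S₀ ∪ {a}).Finite := hS₀fin.union (Set.finite_singleton a)
    exact ⟨hfin, key _ hfin (hsub₀.trans Set.subset_union_left)⟩
  refine Set.Infinite.mono himg (Set.Infinite.image ?_ hS₀fin.infinite_compl)
  intro a ha b hb h
  simp only at h
  have : a ∈ S₀ ∪ {b} := by
    rw [← h]
    exact Set.mem_union_right S₀ rfl
  rcases this with h' | h'
  · exact absurd h' ha
  · exact h'
end

section
/- Let X and Y be finitely supported subsets of an invariant set Z. If neither X nor Y contains an infinite uniformly supported subset, then the Cartesian product X × Y contains no infinite uniformly supported subset. In particular, for a pair (x,y), supp((x,y)) = supp(x) ∪ supp(y). -/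
open Pointwise

/-- if neither `X` nor `Y` contains an infinite uniformly supported subset,
then neither does `X × Y`; moreover `supp (x, y) = supp x ∪ supp y`. -/
theorem stmt10 {A Z : Type*} [Infinite A] [MulAction (finPerm A) Z]
    (hinv : ∀ z : Z, FinitelySupported A z) (X Y : Set Z)
    (hX : FinitelySupported A X) (hY : FinitelySupported A Y)
    (hXn : NoInfUS A X) (hYn : NoInfUS A Y) :
    NoInfUS A (X ×ˢ Y) ∧
      ∀ x y : Z, supp A ((x, y) : Z × Z) = supp A x ∪ supp A y := by
  constructor
  · rintro W hW ⟨S, hSfin, hS⟩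
    have h1 : (Prod.fst '' W).Finite := by
      apply hXn
      · rintro x ⟨w, hw, rfl⟩
        exact (hW hw).1
      · refine ⟨S, hSfin, ?_⟩
        rintro x ⟨w, hw, rfl⟩ π hπ
        have := hS w hw π hπ
        exact congrArg Prod.fst this
    have h2 : (Prod.snd '' W).Finite := by
      apply hYn
      · rintro x ⟨w, hw, rfl⟩
        exact (hW hw).2
      · refine ⟨S, hSfin, ?_⟩
        rintro x ⟨w, hw, rfl⟩ π hπ
        have := hS w hw π hπ
        exact congrArg Prod.snd this
    exact (h1.prod h2).subset fun w hw => ⟨⟨w, hw, rfl⟩, ⟨w, hw, rfl⟩⟩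
  · intro x y
    apply Set.Subset.antisymm
    · intro a ha
      by_contra hc
      simp only [Set.mem_union, not_or] at hc
      obtain ⟨hax, hay⟩ := hc
      simp only [supp, Set.mem_sInter, not_forall, Set.mem_setOf_eq] at hax hay
      obtain ⟨S1, ⟨hS1fin, hS1⟩, haS1⟩ := hax
      obtain ⟨S2, ⟨hS2fin, hS2⟩, haS2⟩ := hay
      have hsup : MulAction.Supports (finPerm A) (S1 ∪ S2) ((x, y) : Z × Z) := by
        intro π hπ
        have hx := hS1 π (fun b hb => hπ (Or.inl hb))
        have hy := hS2 π (fun b hb => hπ (Or.inr hb))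
        exact Prod.ext hx hy
      have := Set.mem_sInter.mp ha (S1 ∪ S2) ⟨hS1fin.union hS2fin, hsup⟩
      rcases this with h | h
      · exact haS1 h
      · exact haS2 h
    · apply Set.union_subset <;>
        intro a ha <;>
        refine Set.mem_sInter.mpr fun S ⟨hSfin, hS⟩ => Set.mem_sInter.mp ha S ⟨hSfin, ?_⟩ <;>
        intro π hπ
      · exact congrArg Prod.fst (hS π hπ)
      · exact congrArg Prod.snd (hS π hπ)
end

section
/- The invariant set A^A_fs of all finitely supported functions from A to A contains no infinite uniformly supported subset; that is, for every finite S ⊆ A, only finitely many finitely supported functions f : A → A are supported by S. -/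
open Pointwise

lemma swap_mem_finPerm_s16 {A : Type*} [DecidableEq A] (c d : A) :
    Equiv.swap c d ∈ finPerm A := by
  apply Set.Finite.subset (Set.toFinite {c, d})
  intro a ha
  simp only [Set.mem_setOf_eq] at ha
  by_contra hc
  simp only [Set.mem_insert_iff, Set.mem_singleton_iff, not_or] at hc
  exact ha (Equiv.swap_apply_of_ne_of_ne hc.1 hc.2)

/-- for every finite `S ⊆ A`, only finitely many functions `f : A → A` are
supported by `S` under the conjugation action `(π • f) a = π • f (π⁻¹ • a)`; hence
`A →_fs A` contains no infinite uniformly supported subset. -/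
theorem stmt16 {A : Type*} [Infinite A] (S : Set A) (hS : S.Finite) :
    {f : A → A | ∀ π : finPerm A, (∀ a ∈ S, π • a = a) →
        ∀ a : A, π • f (π⁻¹ • a) = f a}.Finite := by
  classical
  -- smul on A via finPerm is just application
  have smul_def : ∀ (π : finPerm A) (a : A), π • a = (π : Equiv.Perm A) a := fun _ _ => rfl
  set Z := {f : A → A | ∀ π : finPerm A, (∀ a ∈ S, π • a = a) →
      ∀ a : A, π • f (π⁻¹ • a) = f a} with hZ
  haveI : Fintype S := hS.fintype
  -- key facts
  have fix_swap : ∀ c d : A, c ∉ S → d ∉ S →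
      ∀ a ∈ S, (⟨Equiv.swap c d, swap_mem_finPerm_s16 c d⟩ : finPerm A) • a = a := by
    intro c d hc hd a ha
    have h1 : a ≠ c := fun h => hc (h ▸ ha)
    have h2 : a ≠ d := fun h => hd (h ▸ ha)
    exact Equiv.swap_apply_of_ne_of_ne h1 h2
  have fact1 : ∀ f ∈ Z, ∀ s ∈ S, f s ∈ S := by
    intro f hf s hs
    by_contra hc
    obtain ⟨d, hd⟩ := (hS.insert (f s)).infinite_compl.nonempty
    simp only [Set.mem_compl_iff, Set.mem_insert_iff, not_or] at hd
    set π : finPerm A := ⟨Equiv.swap (f s) d, swap_mem_finPerm_s16 _ _⟩ with hπ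
    have hfix := fix_swap (f s) d hc hd.2
    have := hf π hfix s
    have hinv : π⁻¹ • s = s := by
      show (Equiv.swap (f s) d)⁻¹ s = s
      rw [Equiv.swap_inv]
      exact Equiv.swap_apply_of_ne_of_ne (fun h => hc (h ▸ hs)) (fun h => hd.2 (h ▸ hs))
    rw [hinv] at this
    have : Equiv.swap (f s) d (f s) = f s := this
    rw [Equiv.swap_apply_left] at this
    exact hd.1 this
  have fact2 : ∀ f ∈ Z, ∀ a, a ∉ S → f a ≠ a → f a ∈ S := by
    intro f hf a ha hne
    by_contra hc
    obtain ⟨d, hd⟩ := (hS.insert a |>.insert (f a)).infinite_compl.nonempty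
    simp only [Set.mem_compl_iff, Set.mem_insert_iff, not_or] at hd
    set π : finPerm A := ⟨Equiv.swap (f a) d, swap_mem_finPerm_s16 _ _⟩ with hπ
    have hfix := fix_swap (f a) d hc hd.2.2
    have := hf π hfix a
    have hinv : π⁻¹ • a = a := by
      show (Equiv.swap (f a) d)⁻¹ a = a
      rw [Equiv.swap_inv]
      exact Equiv.swap_apply_of_ne_of_ne (fun h => hne h.symm) (fun h => hd.2.1 h.symm)
    rw [hinv] at this
    have : Equiv.swap (f a) d (f a) = f a := this
    rw [Equiv.swap_apply_left] at this
    exact hd.1 this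
  have fact3 : ∀ f ∈ Z, ∀ a b : A, a ∉ S → b ∉ S → f b = Equiv.swap a b (f a) := by
    intro f hf a b ha hb
    set π : finPerm A := ⟨Equiv.swap a b, swap_mem_finPerm_s16 _ _⟩ with hπ
    have hfix := fix_swap a b ha hb
    have := hf π hfix b
    have hinv : π⁻¹ • b = a := by
      show (Equiv.swap a b)⁻¹ b = a
      rw [Equiv.swap_inv]
      exact Equiv.swap_apply_right a b
    rw [hinv] at this
    exact this.symm
  -- cover Z by a finite family
  set F : ((S → S) × Option S) → (A → A) := fun p a =>
    if h : a ∈ S then (p.1 ⟨a, h⟩ : A) else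
      match p.2 with
      | some s => (s : A)
      | none => a
    with hF
  apply Set.Finite.subset (Set.finite_range F)
  intro f hf
  have hg : ∀ s : S, f s ∈ S := fun s => fact1 f hf s s.2
  by_cases hcase : ∃ a, a ∉ S ∧ f a ≠ a
  · obtain ⟨a₀, ha₀, hne₀⟩ := hcase
    have hfa₀ : f a₀ ∈ S := fact2 f hf a₀ ha₀ hne₀
    refine ⟨(fun s => ⟨f s, hg s⟩, some ⟨f a₀, hfa₀⟩), ?_⟩
    funext a
    simp only [hF]
    by_cases h : a ∈ S
    · simp [h]
    · simp only [h, dite_false]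
      have key := fact3 f hf a₀ a ha₀ h
      rw [key]
      by_cases hab : a₀ = a
      · subst hab; simp
      · rw [Equiv.swap_apply_of_ne_of_ne hne₀ (by rintro hh; rw [hh] at hfa₀; exact h hfa₀)]
  · push_neg at hcase
    refine ⟨(fun s => ⟨f s, hg s⟩, none), ?_⟩
    funext a
    simp only [hF]
    by_cases h : a ∈ S
    · simp [h]
    · simp only [h, dite_false]
      exact (hcase a h).symm
end

section
/- Let X be a finitely supported subset of an invariant set that contains no infinite uniformly supported subset. Then every finitely supported injective function f : X → X is surjective. -/
open Pointwise

/-- if the finitely supported subset `X` of an invariant set contains no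
infinite uniformly supported subset, then every finitely supported injective
`f : X → X` is surjective. -/
theorem stmt17 {A Y : Type*} [Infinite A] [MulAction (finPerm A) Y]
    (hinv : ∀ y : Y, FinitelySupported A y) (X : Set Y)
    (hX : FinitelySupported A X) (h : NoInfUS A X)
    (f : Y → Y) (hmap : Set.MapsTo f X X)
    (hfs : ∃ S : Set A, S.Finite ∧ FnSupportsOn A X S f)
    (hinj : Set.InjOn f X) :
    Set.SurjOn f X X := by
  obtain ⟨S, hSfin, hSf⟩ := hfs
  intro y hy
  obtain ⟨T, hTfin, hTy⟩ := hinv y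
  -- every iterate is in X and supported by S ∪ T
  have key : ∀ n, f^[n] y ∈ X ∧ MulAction.Supports (finPerm A) (S ∪ T) (f^[n] y) := by
    intro n
    induction n with
    | zero =>
      exact ⟨hy, fun π hπ => hTy π (fun a ha => hπ (Or.inr ha))⟩
    | succ n ih =>
      obtain ⟨hmem, hsupp⟩ := ih
      refine ⟨?_, ?_⟩
      · rw [Function.iterate_succ_apply']; exact hmap hmem
      · intro π hπ
        have h1 := (hSf π (fun a ha => hπ (Or.inl ha)) _ hmem).2
        rw [Function.iterate_succ_apply']
        rw [hsupp π hπ] at h1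
        exact h1.symm
  -- the orbit is uniformly supported, hence finite
  have horb : (Set.range (fun n => f^[n] y)).Finite := by
    apply h _ (by rintro _ ⟨n, rfl⟩; exact (key n).1)
    exact ⟨S ∪ T, hSfin.union hTfin, by rintro _ ⟨n, rfl⟩; exact (key n).2⟩
  -- so the iteration repeats
  have : ∃ m n : ℕ, m ≠ n ∧ f^[m] y = f^[n] y := by
    have : Finite (Set.range (fun n => f^[n] y)) := horb
    obtain ⟨m, n, hmn, he⟩ := Finite.exists_ne_map_eq_of_infinite
      (fun n : ℕ => (⟨f^[n] y, n, rfl⟩ : Set.range (fun n => f^[n] y)))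
    exact ⟨m, n, hmn, congrArg Subtype.val he⟩
  obtain ⟨m, n, hmn, he⟩ := this
  wlog hlt : m < n generalizing m n
  · exact this n m hmn.symm he.symm (hmn.lt_or_gt.resolve_left hlt)
  have hiter : Set.InjOn f^[m] X := hinj.iterate hmap m
  have hkey : f^[m] (f^[n - m] y) = f^[m] y := by
    rw [← Function.iterate_add_apply, Nat.add_sub_cancel' hlt.le, ← he]
  have hy2 : y = f^[n - m] y := (hiter (key (n - m)).1 hy hkey).symm
  have hpos : 1 ≤ n - m := Nat.le_sub_of_add_le (by omega)
  refine ⟨f^[n - m - 1] y, (key (n - m - 1)).1, ?_⟩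
  have heq : n - m = (n - m - 1) + 1 := by omega
  rw [heq, Function.iterate_succ_apply'] at hy2
  exact hy2.symm
end

section
/- Let X be a finitely supported subset of an invariant set. If X contains an infinite subset Y equipped with a finitely supported total order ≤, then Y is uniformly supported (every element of Y is supported by supp(≤) ∪ supp(Y)); consequently X contains an infinite uniformly supported subset. -/
/-!
A permutation `π` fixing `supp R ∪ supp Y` pointwise maps `Y` and `R` to themselves, and it has
finite order because it moves only finitely many atoms. So `y` and `π • y` are comparable, and a
strict comparison `y < π • y` would propagate along the finite orbit `y < π • y < π² • y < ⋯`
back to `y`. That the least support `supp x` is itself a finite support rests on finite supports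
being closed under intersection, which needs infinitely many atoms.
-/

open Pointwise

open MulAction

section FinitaryPermutations

variable {A : Type*}

theorem finPerm.swap_mem_s19 [DecidableEq A] (a b : A) : Equiv.swap a b ∈ finPerm A :=
  (Set.toFinite {a, b}).subset fun _ hx => by
    by_contra hab
    simp only [Set.mem_insert_iff, Set.mem_singleton_iff, not_or] at hab
    exact hx (Equiv.swap_apply_of_ne_of_ne hab.1 hab.2)

theorem finPerm.isOfFinOrder (π : finPerm A) : IsOfFinOrder π := by
  classical
  set M : Set A := {a | (π : Equiv.Perm A) a ≠ a}
  have hM : Finite M := π.2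
  have hπM : ∀ a, (π : Equiv.Perm A) a ∈ M ↔ a ∈ M := fun _ =>
    (π : Equiv.Perm A).injective.ne_iff
  have hπ : Equiv.Perm.ofSubtype ((π : Equiv.Perm A).subtypePerm hπM) = π :=
    Equiv.Perm.ofSubtype_subtypePerm hπM fun _ ha => ha
  rw [← (finPerm A).subtype_injective.isOfFinOrder_iff, Subgroup.subtype_apply, ← hπ]
  exact Equiv.Perm.ofSubtype.isOfFinOrder (isOfFinOrder_of_finite _)

end FinitaryPermutations

section Supports

variable {A X : Type*} [Infinite A] [MulAction (finPerm A) X]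

/-- Conjugating by a swap `(a c)` with `c` fresh turns a permutation fixing `S \ {a}` into one
fixing `S`, and the swap itself fixes `x` because it fixes `T`. -/
theorem finPerm.supports_diff_singleton {S T : Set A} {x : X} (hS : S.Finite) (hT : T.Finite)
    (hSx : Supports (finPerm A) S x) (hTx : Supports (finPerm A) T x) {a : A} (ha : a ∉ T) :
    Supports (finPerm A) (S \ {a}) x := by
  classical
  intro π hπ
  obtain ⟨c, hc⟩ := ((hS.union hT).union (π : finPerm A).2).exists_notMem
  simp only [Set.mem_union, Set.mem_ofPred_eq, not_or, not_not] at hc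
  obtain ⟨⟨hcS, hcT⟩, hπc⟩ := hc
  let σ : finPerm A := ⟨Equiv.swap a c, finPerm.swap_mem_s19 a c⟩
  have hσ_of_ne : ∀ b, b ≠ a → b ≠ c → σ • b = b := fun _ => Equiv.swap_apply_of_ne_of_ne
  have hσx : σ • x = x := hTx σ fun b hb => hσ_of_ne b (ne_of_mem_of_not_mem hb ha)
    (ne_of_mem_of_not_mem hb hcT)
  have hπσ : ∀ s ∈ S, π • σ • s = σ • s := by
    intro s hs
    by_cases hsa : s = a
    · rw [hsa, show σ • a = c from Equiv.swap_apply_left a c]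
      exact hπc
    · rw [hσ_of_ne s hsa (ne_of_mem_of_not_mem hs hcS)]
      exact hπ ⟨hs, hsa⟩
  have hconj : (σ⁻¹ * π * σ) • x = x :=
    hSx _ fun s hs => by rw [mul_smul, mul_smul, hπσ s hs, inv_smul_smul]
  rw [mul_smul, mul_smul, hσx, inv_smul_eq_iff, hσx] at hconj
  exact hconj

theorem finPerm.supports_inter {S T : Set A} {x : X} (hS : S.Finite) (hT : T.Finite)
    (hSx : Supports (finPerm A) S x) (hTx : Supports (finPerm A) T x) :
    Supports (finPerm A) (S ∩ T) x := by
  have hdiff : ∀ D ⊆ S \ T, D.Finite → Supports (finPerm A) (S \ D) x := by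
    intro D hDST hD
    induction D, hD using Set.Finite.induction_on with
    | empty => simpa using hSx
    | @insert a D _ _ ih =>
      rw [Set.insert_eq, Set.union_comm, ← Set.sdiff_sdiff]
      exact finPerm.supports_diff_singleton hS.sdiff hT
        (ih ((Set.subset_insert a D).trans hDST)) hTx (hDST (Set.mem_insert a D)).2
  simpa only [Set.sdiff_sdiff_right_self] using hdiff (S \ T) subset_rfl hS.sdiff

theorem FinitelySupported.exists_isLeast {x : X} (hx : FinitelySupported A x) :
    ∃ m, IsLeast {S : Set A | S.Finite ∧ Supports (finPerm A) S x} m := by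
  obtain ⟨S₀, hS₀, hS₀x⟩ := hx
  obtain ⟨m, ⟨hmS₀, hm, hmx⟩, hmin⟩ :=
    (hS₀.finite_subsets.subset fun _ hS => hS.1).exists_minimal
      (⟨S₀, subset_rfl, hS₀, hS₀x⟩ :
        {S : Set A | S ⊆ S₀ ∧ S.Finite ∧ Supports (finPerm A) S x}.Nonempty)
  refine ⟨m, ⟨hm, hmx⟩, fun S ⟨hS, hSx⟩ => ?_⟩
  have hmS : m ∩ S ∈ {S : Set A | S ⊆ S₀ ∧ S.Finite ∧ Supports (finPerm A) S x} :=
    ⟨Set.inter_subset_left.trans hmS₀, hm.inter_of_left S,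
      finPerm.supports_inter hm hS hmx hSx⟩
  exact (hmin hmS Set.inter_subset_left).trans Set.inter_subset_right

theorem FinitelySupported.isLeast_supp {x : X} (hx : FinitelySupported A x) :
    IsLeast {S : Set A | S.Finite ∧ Supports (finPerm A) S x} (supp A x) := by
  obtain ⟨m, hm⟩ := hx.exists_isLeast
  rwa [supp, ← Set.sInf_eq_sInter, hm.csInf_eq]

end Supports

section FiniteOrder

variable {M α : Type*} [Monoid M] [MulAction M α] {g : M}

theorem IsOfFinOrder.rel_smul_symm (hg : IsOfFinOrder g) {r : α → α → Prop}
    (htrans : ∀ a b c, r a b → r b c → r a c) (hr : ∀ a b, r a b → r (g • a) (g • b)) {x : α}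
    (hx : r x (g • x)) : r (g • x) x := by
  obtain ⟨n, hn, hgn⟩ := hg.exists_pow_eq_one
  have hstep : ∀ k : ℕ, r (g ^ k • x) (g ^ (k + 1) • x) := by
    intro k
    induction k with
    | zero => simpa using hx
    | succ k ih => simpa only [pow_succ', mul_smul] using hr _ _ ih
  have hchain : ∀ k : ℕ, r x (g ^ (k + 1) • x) := by
    intro k
    induction k with
    | zero => simpa using hx
    | succ k ih => exact htrans _ _ _ ih (hstep (k + 1))
  have hperiod : g • g ^ (2 * n - 1) • x = x := by
    rw [smul_smul, ← pow_succ', Nat.sub_add_cancel (by omega), pow_mul', hgn, one_pow, one_smul]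
  have h := hr _ _ (hchain (2 * n - 2))
  rwa [show 2 * n - 2 + 1 = 2 * n - 1 by omega, hperiod] at h

theorem IsOfFinOrder.smul_eq_self_of_smul_set_eq (hg : IsOfFinOrder g) {R : Set (α × α)}
    (hR : g • R = R) (hantisymm : ∀ x y : α, (x, y) ∈ R → (y, x) ∈ R → x = y)
    (htrans : ∀ x y z : α, (x, y) ∈ R → (y, z) ∈ R → (x, z) ∈ R) {x : α}
    (hx : (x, g • x) ∈ R ∨ (g • x, x) ∈ R) : g • x = x := by
  have hgR : ∀ a b, (a, b) ∈ R → (g • a, g • b) ∈ R := fun a b hab =>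
    hR ▸ Set.smul_mem_smul_set hab
  rcases hx with hx | hx
  · exact hantisymm _ _ (hg.rel_smul_symm htrans hgR hx) hx
  · exact hantisymm _ _ hx
      (hg.rel_smul_symm (fun a b c hab hbc => htrans c b a hbc hab) (fun a b => hgR b a) hx)

end FiniteOrder

theorem stmt19_general {A Z : Type*} [Infinite A] [MulAction (finPerm A) Z]
    (X : Set Z)
    (Y : Set Z) (hYX : Y ⊆ X) (hYinf : Y.Infinite) (hY : FinitelySupported A Y)
    (R : Set (Z × Z)) (hR : FinitelySupported A R)
    (hantisymm : ∀ x y : Z, (x, y) ∈ R → (y, x) ∈ R → x = y)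
    (htrans : ∀ x y z : Z, (x, y) ∈ R → (y, z) ∈ R → (x, z) ∈ R)
    (htotal : ∀ x ∈ Y, ∀ y ∈ Y, (x, y) ∈ R ∨ (y, x) ∈ R) :
    (∀ y ∈ Y, MulAction.Supports (finPerm A) (supp A R ∪ supp A Y) y) ∧
      UniformlySupported A Y ∧
      ∃ W ⊆ X, W.Infinite ∧ UniformlySupported A W := by
  obtain ⟨⟨hRfin, hRsupp⟩, -⟩ := hR.isLeast_supp
  obtain ⟨⟨hYfin, hYsupp⟩, -⟩ := hY.isLeast_supp
  have hsupp : ∀ y ∈ Y, Supports (finPerm A) (supp A R ∪ supp A Y) y := by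
    intro y hy π hπ
    have hπY : π • Y = Y := hYsupp π fun a ha => hπ (Or.inr ha)
    have hπy : π • y ∈ Y := hπY ▸ Set.smul_mem_smul_set hy
    exact (finPerm.isOfFinOrder π).smul_eq_self_of_smul_set_eq
      (hRsupp π fun a ha => hπ (Or.inl ha)) hantisymm htrans (htotal y hy _ hπy)
  have hYus : UniformlySupported A Y := ⟨_, hRfin.union hYfin, hsupp⟩
  exact ⟨hsupp, hYus, Y, hYX, hYinf, hYus⟩

/-- if a finitely supported subset `X` of an invariant set contains an
infinite finitely supported subset `Y` carrying a finitely supported total order `R`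
(a finitely supported subset of `Y × Y`), then every element of `Y` is supported by
`supp(R) ∪ supp(Y)`, so `Y` is uniformly supported; consequently `X` contains an
infinite uniformly supported subset. -/
theorem stmt19 {A Z : Type*} [Infinite A] [MulAction (finPerm A) Z]
    (hinv : ∀ z : Z, FinitelySupported A z) (X : Set Z)
    (hX : FinitelySupported A X)
    (Y : Set Z) (hYX : Y ⊆ X) (hYinf : Y.Infinite) (hY : FinitelySupported A Y)
    (R : Set (Z × Z)) (hR : FinitelySupported A R) (hRY : R ⊆ Y ×ˢ Y)
    (hrefl : ∀ y ∈ Y, (y, y) ∈ R)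
    (hantisymm : ∀ x y : Z, (x, y) ∈ R → (y, x) ∈ R → x = y)
    (htrans : ∀ x y z : Z, (x, y) ∈ R → (y, z) ∈ R → (x, z) ∈ R)
    (htotal : ∀ x ∈ Y, ∀ y ∈ Y, (x, y) ∈ R ∨ (y, x) ∈ R) :
    (∀ y ∈ Y, MulAction.Supports (finPerm A) (supp A R ∪ supp A Y) y) ∧
      UniformlySupported A Y ∧
      ∃ W ⊆ X, W.Infinite ∧ UniformlySupported A W :=
  stmt19_general X Y hYX hYinf hY R hR hantisymm htrans htotal
end
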